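/- If a competitor forecaster g has regret at most R₁ under learner L₁ on a subsequence, and for every divisible segment there exist pass-through forecasters with regret at most r under L₀, then combining bounds of the form L_T^S ≤ ∑_{S' div. S} L_T^{S'} + r^S (for divisible S) and L_T^S ≤ ∑_{t : x_t ∈ S} ℓ_t(g(x_t)) + p^S (for S in the competitor partition) yields the HPF total loss bound: L_T^HPF ≤ L_T^CPF + ∑_{S ∈ P indivisible} p^S + ∑_{S ∈ P divisible} q^S + ∑_{S ∈ H : S ⊃ S' ∈ P} r^S. Formally: given a hierarchical partition H of X, a partition P ⊆ H, reals L(S) for S ∈ H, reals p(S), q(S), r(S), and reals c(S) for S ∈ P, assume (i) L(S) ≤ c(S) + p(S) for indivisible S ∈ P, (ii) L(S) ≤ c(S) + q(S) for divisible S ∈ P, (iii) L(S) ≤ ∑_{S' div. S} L(S') + r(S) for all divisible S ∈ H. Then L(X) ≤ ∑_{S∈P} c(S) + ∑_{S∈P indiv.} p(S) + ∑_{S∈P div.} q(S) + ∑_{S∈H : S ⊃ S'∈P} r(S). -/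

import Mathlib

/-- A hierarchical partition of a nonempty set `X`: either `{X}`, or the union of `{X}`
with hierarchical partitions of the parts of a partition of `X` into `n ≥ 2` nonempty
pairwise disjoint parts. -/
inductive IsHierarchicalPartition {α : Type*} : Set (Set α) → Set α → Prop
  | base (X : Set α) (hX : X.Nonempty) : IsHierarchicalPartition {X} X
  | node (X : Set α) (n : ℕ) (hn : 2 ≤ n) (parts : Fin n → Set α)
      (Hs : Fin n → Set (Set α))
      (hne : ∀ i, (parts i).Nonempty)
      (hdisj : ∀ i j, i ≠ j → Disjoint (parts i) (parts j))
      (hunion : ⋃ i, parts i = X)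
      (hrec : ∀ i, IsHierarchicalPartition (Hs i) (parts i)) :
      IsHierarchicalPartition ((⋃ i, Hs i) ∪ {X}) X

/-- `S'` divides `S` in `H`: both are segments, `S' ⊂ S`, and no segment lies strictly between. -/
def Divides {α : Type*} (H : Set (Set α)) (S' S : Set α) : Prop :=
  S' ∈ H ∧ S ∈ H ∧ S' ⊂ S ∧ ¬∃ T ∈ H, S' ⊂ T ∧ T ⊂ S

/-- A segment is divisible if some segment divides it. -/
def Divisible {α : Type*} (H : Set (Set α)) (S : Set α) : Prop :=
  S ∈ H ∧ ∃ S', Divides H S' S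

/-- A segment is indivisible if no segment divides it. -/
def Indivisible {α : Type*} (H : Set (Set α)) (S : Set α) : Prop :=
  S ∈ H ∧ ¬∃ S', Divides H S' S

/-- `P` is a partition of `X`: nonempty, pairwise disjoint sets whose union is `X`. -/
def IsPartition {α : Type*} (P : Set (Set α)) (X : Set α) : Prop :=
  (∀ S ∈ P, S.Nonempty) ∧ P.PairwiseDisjoint id ∧ ⋃₀ P = X

lemma IHP.mem_self {α : Type*} {H : Set (Set α)} {X : Set α}
    (h : IsHierarchicalPartition H X) : X ∈ H := by
  cases h with
  | base X hX => exact rfl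
  | node X n hn parts Hs hne hdisj hunion hrec => exact Or.inr rfl

lemma IHP.subset_nonempty {α : Type*} {H : Set (Set α)} {X : Set α}
    (h : IsHierarchicalPartition H X) : ∀ S ∈ H, S ⊆ X ∧ S.Nonempty := by
  induction h with
  | base X hX =>
    intro S hS
    rw [Set.mem_singleton_iff] at hS; subst hS
    exact ⟨subset_rfl, hX⟩
  | node X n hn parts Hs hne hdisj hunion hrec ih =>
    intro S hS
    rcases hS with hS | hS
    · obtain ⟨i, hSi⟩ := Set.mem_iUnion.mp hS
      obtain ⟨h1, h2⟩ := ih i S hSi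
      exact ⟨h1.trans (hunion ▸ Set.subset_iUnion parts i), h2⟩
    · rw [Set.mem_singleton_iff] at hS; subst hS
      refine ⟨subset_rfl, ?_⟩
      obtain ⟨x, hx⟩ := hne ⟨0, by omega⟩
      exact ⟨x, hunion ▸ Set.mem_iUnion.mpr ⟨_, hx⟩⟩

lemma IHP.finite {α : Type*} {H : Set (Set α)} {X : Set α}
    (h : IsHierarchicalPartition H X) : H.Finite := by
  induction h with
  | base X hX => exact Set.finite_singleton X
  | node X n hn parts Hs hne hdisj hunion hrec ih =>
    exact (Set.finite_iUnion ih).union (Set.finite_singleton X)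

lemma hpf_aux {α : Type*} (L p q r c : Set α → ℝ) {H : Set (Set α)} {X : Set α}
    (hH : IsHierarchicalPartition H X) :
    ∀ P : Set (Set α), P ⊆ H → IsPartition P X →
      (∀ S ∈ P, Indivisible H S → L S ≤ c S + p S) →
      (∀ S ∈ P, Divisible H S → L S ≤ c S + q S) →
      (∀ S ∈ H, Divisible H S →
        L S ≤ (∑ᶠ S' ∈ {S' | Divides H S' S}, L S') + r S) →
      L X ≤ (∑ᶠ S ∈ P, c S) + (∑ᶠ S ∈ {S | S ∈ P ∧ Indivisible H S}, p S)
        + (∑ᶠ S ∈ {S | S ∈ P ∧ Divisible H S}, q S)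
        + ∑ᶠ S ∈ {S | S ∈ H ∧ ∃ S' ∈ P, S' ⊂ S}, r S := by
  induction hH with
  | base X hX =>
    intro P hPH hpart hindiv hdiv hrec
    have hXP : X ∈ P := by
      obtain ⟨x, hx⟩ := hX
      rw [← hpart.2.2] at hx
      obtain ⟨S, hS, _⟩ := hx
      have := hPH hS
      rw [Set.mem_singleton_iff] at this
      exact this ▸ hS
    have hP : P = {X} := Set.Subset.antisymm hPH (by simpa using hXP)
    subst hP
    have hindivX : Indivisible {X} X := by
      refine ⟨rfl, ?_⟩
      rintro ⟨S', h1, -, hss, -⟩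
      rw [Set.mem_singleton_iff] at h1
      exact ssubset_irrfl _ (h1 ▸ hss)
    have e1 : {S | S ∈ ({X} : Set (Set α)) ∧ Indivisible {X} S} = {X} := by
      ext S
      simp only [Set.mem_setOf_eq, Set.mem_singleton_iff]
      exact ⟨fun h => h.1, fun h => ⟨h, h ▸ hindivX⟩⟩
    have e2 : {S | S ∈ ({X} : Set (Set α)) ∧ Divisible {X} S} = ∅ := by
      ext S
      simp only [Set.mem_setOf_eq, Set.mem_empty_iff_false, iff_false, not_and]
      rintro rfl hD
      exact hindivX.2 hD.2
    have e3 : {S | S ∈ ({X} : Set (Set α)) ∧ ∃ S' ∈ ({X} : Set (Set α)), S' ⊂ S} = ∅ := by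
      ext S
      simp only [Set.mem_setOf_eq, Set.mem_empty_iff_false, iff_false, not_and,
        Set.mem_singleton_iff]
      rintro rfl ⟨S', rfl, hss⟩
      exact ssubset_irrfl _ hss
    rw [e1, e2, e3, finsum_mem_singleton, finsum_mem_singleton, finsum_mem_empty,
      finsum_mem_empty]
    have := hindiv X rfl hindivX
    linarith
  | node X n hn parts Hs hne hdisj hunion hrec' ih =>
    intro P hPH hpart hindiv hdiv hrec
    have hHP : IsHierarchicalPartition ((⋃ i, Hs i) ∪ {X}) X :=
      .node X n hn parts Hs hne hdisj hunion hrec'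
    have hfin : ((⋃ i, Hs i) ∪ {X} : Set (Set α)).Finite := IHP.finite hHP
    have hsub : ∀ i, ∀ S ∈ Hs i, S ⊆ parts i ∧ S.Nonempty :=
      fun i => IHP.subset_nonempty (hrec' i)
    have hpartsmem : ∀ i, parts i ∈ Hs i := fun i => IHP.mem_self (hrec' i)
    have hpartsX : ∀ i, parts i ⊆ X := fun i => hunion ▸ Set.subset_iUnion parts i
    have hloc : ∀ {S : Set α} {i j}, S.Nonempty → S ⊆ parts i → S ⊆ parts j → i = j := by
      rintro S i j ⟨x, hx⟩ hi hj
      by_contra hij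
      exact (hdisj i j hij).ne_of_mem (hi hx) (hj hx) rfl
    have : Nontrivial (Fin n) := Fin.nontrivial_iff_two_le.mpr hn
    have hpartsne : ∀ i, parts i ≠ X := by
      intro i hie
      obtain ⟨j, hj⟩ := exists_ne i
      obtain ⟨x, hx⟩ := hne j
      have hx2 : x ∈ parts i := by rw [hie]; exact hpartsX j hx
      exact (hdisj j i hj).ne_of_mem hx hx2 rfl
    have hpartsssX : ∀ i, parts i ⊂ X :=
      fun i => ssubset_iff_subset_ne.mpr ⟨hpartsX i, hpartsne i⟩
    have hXnotHs : ∀ i, X ∉ Hs i := by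
      intro i hX
      exact hpartsne i (Set.Subset.antisymm (hpartsX i) (hsub i X hX).1)
    have hmemHs : ∀ {S : Set α} {i j}, S ∈ Hs i → S ∈ Hs j → i = j :=
      fun {S i j} hi hj => hloc (hsub i S hi).2 (hsub i S hi).1 (hsub j S hj).1
    -- Divides transfer
    have hDivEq : ∀ i, ∀ S ∈ Hs i,
        {S' | Divides ((⋃ i, Hs i) ∪ {X}) S' S} = {S' | Divides (Hs i) S' S} := by
      intro i S hSi
      have hSsub := (hsub i S hSi).1
      ext S'
      simp only [Set.mem_setOf_eq]
      constructor
      · rintro ⟨h1, -, h3, h4⟩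
        have hS'i : S' ∈ Hs i := by
          rcases h1 with h1 | h1
          · obtain ⟨j, hj⟩ := Set.mem_iUnion.mp h1
            have := hloc (hsub j S' hj).2 (hsub j S' hj).1 (h3.subset.trans hSsub)
            exact this ▸ hj
          · rw [Set.mem_singleton_iff] at h1; subst h1
            exact (ssubset_irrfl _ (h3.trans_subset (hSsub.trans (hpartsX i)))).elim
        refine ⟨hS'i, hSi, h3, ?_⟩
        rintro ⟨T, hT, hT1, hT2⟩
        exact h4 ⟨T, Or.inl (Set.mem_iUnion.mpr ⟨i, hT⟩), hT1, hT2⟩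
      · rintro ⟨h1, h2, h3, h4⟩
        refine ⟨Or.inl (Set.mem_iUnion.mpr ⟨i, h1⟩), Or.inl (Set.mem_iUnion.mpr ⟨i, hSi⟩),
          h3, ?_⟩
        rintro ⟨T, hT, hT1, hT2⟩
        rcases hT with hT | hT
        · obtain ⟨j, hj⟩ := Set.mem_iUnion.mp hT
          have hji : j = i := hloc (hsub j T hj).2 (hsub j T hj).1 (hT2.subset.trans hSsub)
          exact h4 ⟨T, hji ▸ hj, hT1, hT2⟩
        · rw [Set.mem_singleton_iff] at hT; subst hT
          exact ssubset_irrfl _ (hT2.trans_subset (hSsub.trans (hpartsX i)))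
    have hDivPart : ∀ i, Divides ((⋃ i, Hs i) ∪ {X}) (parts i) X := by
      intro i
      refine ⟨Or.inl (Set.mem_iUnion.mpr ⟨i, hpartsmem i⟩), Or.inr rfl, hpartsssX i, ?_⟩
      rintro ⟨T, hT, hT1, hT2⟩
      rcases hT with hT | hT
      · obtain ⟨j, hj⟩ := Set.mem_iUnion.mp hT
        have hij : i = j := hloc (hne i) subset_rfl (hT1.subset.trans (hsub j T hj).1)
        exact hT1.not_subset (hij ▸ (hsub j T hj).1)
      · rw [Set.mem_singleton_iff] at hT; subst hT
        exact ssubset_irrfl _ hT2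
    have hXdiv : Divisible ((⋃ i, Hs i) ∪ {X}) X :=
      ⟨Or.inr rfl, parts ⟨0, by omega⟩, hDivPart ⟨0, by omega⟩⟩
    by_cases hXP : X ∈ P
    · -- then P = {X}
      have hP : P = {X} := by
        apply Set.Subset.antisymm
        · intro S hS
          rw [Set.mem_singleton_iff]
          by_contra hSX
          have hd : Disjoint S X := hpart.2.1 hS hXP hSX
          obtain ⟨x, hx⟩ := hpart.1 S hS
          have hxX : x ∈ X := hpart.2.2 ▸ Set.subset_sUnion_of_mem hS hx
          exact hd.ne_of_mem hx hxX rfl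
        · simpa using hXP
      subst hP
      have e2 : {S | S ∈ ({X} : Set (Set α)) ∧ Divisible ((⋃ i, Hs i) ∪ {X}) S} = {X} := by
        ext S
        simp only [Set.mem_setOf_eq, Set.mem_singleton_iff]
        exact ⟨fun h => h.1, fun h => ⟨h, h ▸ hXdiv⟩⟩
      have e1 : {S | S ∈ ({X} : Set (Set α)) ∧ Indivisible ((⋃ i, Hs i) ∪ {X}) S} = ∅ := by
        ext S
        simp only [Set.mem_setOf_eq, Set.mem_empty_iff_false, iff_false, not_and,
          Set.mem_singleton_iff]
        rintro rfl hI
        exact hI.2 hXdiv.2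
      have e3 : {S | S ∈ (⋃ i, Hs i) ∪ {X} ∧ ∃ S' ∈ ({X} : Set (Set α)), S' ⊂ S} = ∅ := by
        ext S
        simp only [Set.mem_setOf_eq, Set.mem_empty_iff_false, iff_false, not_and,
          Set.mem_singleton_iff]
        rintro hS ⟨S', rfl, hss⟩
        exact ssubset_irrfl _ (hss.trans_subset (IHP.subset_nonempty hHP S hS).1)
      rw [e1, e2, e3, finsum_mem_singleton, finsum_mem_singleton, finsum_mem_empty,
        finsum_mem_empty]
      have := hdiv X rfl hXdiv
      linarith
    · -- X ∉ P : recurse into each part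
      set Q : Fin n → Set (Set α) := fun i => {S | S ∈ P ∧ S ⊆ parts i} with hQdef
      have hPHs : ∀ S ∈ P, ∃ i, S ∈ Hs i := by
        intro S hS
        rcases hPH hS with h | h
        · exact Set.mem_iUnion.mp h
        · rw [Set.mem_singleton_iff] at h; subst h; exact absurd hS hXP
      have hQHs : ∀ i, Q i ⊆ Hs i := by
        intro i S hS
        obtain ⟨j, hj⟩ := hPHs S hS.1
        have := hloc (hpart.1 S hS.1) (hsub j S hj).1 hS.2
        exact this ▸ hj
      have hPmemQ : ∀ S ∈ P, ∃ i, S ∈ Q i := by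
        intro S hS
        obtain ⟨j, hj⟩ := hPHs S hS
        exact ⟨j, hS, (hsub j S hj).1⟩
      have hQUnion : P = ⋃ i, Q i := by
        ext S
        constructor
        · intro hS; exact Set.mem_iUnion.mpr (hPmemQ S hS)
        · intro hS; obtain ⟨i, hi⟩ := Set.mem_iUnion.mp hS; exact hi.1
      have hQDisj : Pairwise (Function.onFun Disjoint Q) := by
        intro i j hij
        rw [Function.onFun, Set.disjoint_left]
        intro S hSi hSj
        exact hij (hloc (hpart.1 S hSi.1) hSi.2 hSj.2)
      have hHsFin : ∀ i, (Hs i).Finite := fun i => IHP.finite (hrec' i)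
      have hQFin : ∀ i, (Q i).Finite := fun i => (hHsFin i).subset (hQHs i)
      have hQpart : ∀ i, IsPartition (Q i) (parts i) := by
        intro i
        refine ⟨fun S hS => hpart.1 S hS.1, hpart.2.1.subset (fun S hS => hS.1), ?_⟩
        apply Set.Subset.antisymm
        · rintro x ⟨S, hS, hxS⟩
          exact hS.2 hxS
        · intro x hx
          have hxX : x ∈ X := hpartsX i hx
          rw [← hpart.2.2] at hxX
          obtain ⟨S, hS, hxS⟩ := hxX
          obtain ⟨j, hj⟩ := hPmemQ S hS
          have hji : j = i := by
            by_contra hc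
            exact (hdisj j i hc).ne_of_mem (hj.2 hxS) hx rfl
          exact ⟨S, hji ▸ hj, hxS⟩
      have hIndivEq : ∀ i, ∀ S ∈ Hs i,
          (Indivisible ((⋃ i, Hs i) ∪ {X}) S ↔ Indivisible (Hs i) S) := by
        intro i S hSi
        have hd := hDivEq i S hSi
        constructor
        · rintro ⟨-, h2⟩
          refine ⟨hSi, ?_⟩
          rintro ⟨S', hS'⟩
          exact h2 ⟨S', (Set.ext_iff.mp hd S').mpr hS'⟩
        · rintro ⟨-, h2⟩
          refine ⟨Or.inl (Set.mem_iUnion.mpr ⟨i, hSi⟩), ?_⟩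
          rintro ⟨S', hS'⟩
          exact h2 ⟨S', (Set.ext_iff.mp hd S').mp hS'⟩
      have hDivisEq : ∀ i, ∀ S ∈ Hs i,
          (Divisible ((⋃ i, Hs i) ∪ {X}) S ↔ Divisible (Hs i) S) := by
        intro i S hSi
        have hd := hDivEq i S hSi
        constructor
        · rintro ⟨-, S', hS'⟩
          exact ⟨hSi, S', (Set.ext_iff.mp hd S').mp hS'⟩
        · rintro ⟨-, S', hS'⟩
          exact ⟨Or.inl (Set.mem_iUnion.mpr ⟨i, hSi⟩), S', (Set.ext_iff.mp hd S').mpr hS'⟩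
      have hbound : ∀ i, L (parts i) ≤ (∑ᶠ S ∈ Q i, c S)
          + (∑ᶠ S ∈ {S | S ∈ Q i ∧ Indivisible (Hs i) S}, p S)
          + (∑ᶠ S ∈ {S | S ∈ Q i ∧ Divisible (Hs i) S}, q S)
          + ∑ᶠ S ∈ {S | S ∈ Hs i ∧ ∃ S' ∈ Q i, S' ⊂ S}, r S := by
        intro i
        refine ih i (Q i) (hQHs i) (hQpart i) ?_ ?_ ?_
        · intro S hS hI
          exact hindiv S hS.1 ((hIndivEq i S (hQHs i hS)).mpr hI)
        · intro S hS hD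
          exact hdiv S hS.1 ((hDivisEq i S (hQHs i hS)).mpr hD)
        · intro S hSi hD
          have h1 := hrec S (Or.inl (Set.mem_iUnion.mpr ⟨i, hSi⟩))
            ((hDivisEq i S hSi).mpr hD)
          rwa [hDivEq i S hSi] at h1
      have hinj : Function.Injective parts := by
        intro i j hij
        by_contra hc
        obtain ⟨x, hx⟩ := hne i
        have hx2 : x ∈ parts j := hij ▸ hx
        exact (hdisj i j hc).ne_of_mem hx hx2 rfl
      have hDivX : {S' | Divides ((⋃ i, Hs i) ∪ {X}) S' X} = Set.range parts := by
        ext S'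
        simp only [Set.mem_setOf_eq, Set.mem_range]
        constructor
        · rintro ⟨h1, -, h3, h4⟩
          rcases h1 with h1 | h1
          · obtain ⟨i, hi⟩ := Set.mem_iUnion.mp h1
            rcases eq_or_ne (parts i) S' with he | he
            · exact ⟨i, he⟩
            · have hss : S' ⊂ parts i :=
                ssubset_iff_subset_ne.mpr ⟨(hsub i S' hi).1, fun h => he h.symm⟩
              exact absurd ⟨parts i, Or.inl (Set.mem_iUnion.mpr ⟨i, hpartsmem i⟩),
                hss, hpartsssX i⟩ h4
          · rw [Set.mem_singleton_iff] at h1; subst h1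
            exact absurd h3 (ssubset_irrfl _)
        · rintro ⟨i, rfl⟩
          exact hDivPart i
      have htop : L X ≤ (∑ i, L (parts i)) + r X := by
        have h1 := hrec X (Or.inr rfl) hXdiv
        rwa [hDivX, finsum_mem_range hinj, finsum_eq_sum_of_fintype] at h1
      -- sum identities
      have hA : (∑ᶠ S ∈ P, c S) = ∑ i, ∑ᶠ S ∈ Q i, c S := by
        rw [hQUnion, finsum_mem_iUnion hQDisj hQFin, finsum_eq_sum_of_fintype]
      have hBset : {S | S ∈ P ∧ Indivisible ((⋃ i, Hs i) ∪ {X}) S}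
          = ⋃ i, {S | S ∈ Q i ∧ Indivisible (Hs i) S} := by
        ext S
        simp only [Set.mem_setOf_eq, Set.mem_iUnion]
        constructor
        · rintro ⟨hSP, hI⟩
          obtain ⟨i, hi⟩ := hPmemQ S hSP
          exact ⟨i, hi, (hIndivEq i S (hQHs i hi)).mp hI⟩
        · rintro ⟨i, hi, hI⟩
          exact ⟨hi.1, (hIndivEq i S (hQHs i hi)).mpr hI⟩
      have hBsum : (∑ᶠ S ∈ {S | S ∈ P ∧ Indivisible ((⋃ i, Hs i) ∪ {X}) S}, p S)
          = ∑ i, ∑ᶠ S ∈ {S | S ∈ Q i ∧ Indivisible (Hs i) S}, p S := by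
        rw [hBset, finsum_mem_iUnion
          (fun i j hij => ((hQDisj hij).mono (fun S hS => hS.1) (fun S hS => hS.1)))
          (fun i => (hQFin i).subset (fun S hS => hS.1)), finsum_eq_sum_of_fintype]
      have hCset : {S | S ∈ P ∧ Divisible ((⋃ i, Hs i) ∪ {X}) S}
          = ⋃ i, {S | S ∈ Q i ∧ Divisible (Hs i) S} := by
        ext S
        simp only [Set.mem_setOf_eq, Set.mem_iUnion]
        constructor
        · rintro ⟨hSP, hI⟩
          obtain ⟨i, hi⟩ := hPmemQ S hSP
          exact ⟨i, hi, (hDivisEq i S (hQHs i hi)).mp hI⟩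
        · rintro ⟨i, hi, hI⟩
          exact ⟨hi.1, (hDivisEq i S (hQHs i hi)).mpr hI⟩
      have hCsum : (∑ᶠ S ∈ {S | S ∈ P ∧ Divisible ((⋃ i, Hs i) ∪ {X}) S}, q S)
          = ∑ i, ∑ᶠ S ∈ {S | S ∈ Q i ∧ Divisible (Hs i) S}, q S := by
        rw [hCset, finsum_mem_iUnion
          (fun i j hij => ((hQDisj hij).mono (fun S hS => hS.1) (fun S hS => hS.1)))
          (fun i => (hQFin i).subset (fun S hS => hS.1)), finsum_eq_sum_of_fintype]
      have hS0 : ∃ S₀ ∈ P, S₀ ⊂ X := by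
        have hXne : X.Nonempty := (IHP.subset_nonempty hHP X (Or.inr rfl)).2
        obtain ⟨x, hx⟩ := hXne
        rw [← hpart.2.2] at hx
        obtain ⟨S₀, hS₀, hxS⟩ := hx
        exact ⟨S₀, hS₀, ssubset_iff_subset_ne.mpr
          ⟨hpart.2.2 ▸ Set.subset_sUnion_of_mem hS₀, fun h => hXP (h ▸ hS₀)⟩⟩
      have hDset : {S | S ∈ (⋃ i, Hs i) ∪ {X} ∧ ∃ S' ∈ P, S' ⊂ S}
          = (⋃ i, {S | S ∈ Hs i ∧ ∃ S' ∈ Q i, S' ⊂ S}) ∪ {X} := by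
        ext S
        simp only [Set.mem_setOf_eq, Set.mem_union, Set.mem_iUnion, Set.mem_singleton_iff]
        constructor
        · rintro ⟨hSH, S', hS'P, hss⟩
          rcases hSH with ⟨i, hi⟩ | hSH
          · exact Or.inl ⟨i, hi, S', ⟨hS'P, hss.subset.trans (hsub i S hi).1⟩, hss⟩
          · exact Or.inr hSH
        · rintro (⟨i, hi, S', hS', hss⟩ | rfl)
          · exact ⟨Or.inl ⟨i, hi⟩, S', hS'.1, hss⟩
          · obtain ⟨S₀, hS₀, hss⟩ := hS0
            exact ⟨Or.inr rfl, S₀, hS₀, hss⟩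
      have hDdisj : Disjoint (⋃ i, {S | S ∈ Hs i ∧ ∃ S' ∈ Q i, S' ⊂ S})
          ({X} : Set (Set α)) := by
        rw [Set.disjoint_right]
        intro S hS1 hS2
        rw [Set.mem_singleton_iff] at hS1; subst hS1
        obtain ⟨i, hi⟩ := Set.mem_iUnion.mp hS2
        exact hXnotHs i hi.1
      have hDfdisj : Pairwise (Function.onFun Disjoint fun i => {S | S ∈ Hs i ∧ ∃ S' ∈ Q i, S' ⊂ S}) := by
        intro i j hij
        rw [Function.onFun, Set.disjoint_left]
        intro S hSi hSj
        exact hij (hmemHs hSi.1 hSj.1)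
      have hDsum : (∑ᶠ S ∈ {S | S ∈ (⋃ i, Hs i) ∪ {X} ∧ ∃ S' ∈ P, S' ⊂ S}, r S)
          = (∑ i, ∑ᶠ S ∈ {S | S ∈ Hs i ∧ ∃ S' ∈ Q i, S' ⊂ S}, r S) + r X := by
        rw [hDset, finsum_mem_union hDdisj
          (Set.finite_iUnion (fun i => (hHsFin i).subset (fun S hS => hS.1)))
          (Set.finite_singleton X),
          finsum_mem_iUnion hDfdisj (fun i => (hHsFin i).subset (fun S hS => hS.1)),
          finsum_eq_sum_of_fintype, finsum_mem_singleton]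
      rw [hA, hBsum, hCsum, hDsum]
      have h2 : (∑ i, L (parts i)) ≤ ∑ i, ((∑ᶠ S ∈ Q i, c S)
          + (∑ᶠ S ∈ {S | S ∈ Q i ∧ Indivisible (Hs i) S}, p S)
          + (∑ᶠ S ∈ {S | S ∈ Q i ∧ Divisible (Hs i) S}, q S)
          + ∑ᶠ S ∈ {S | S ∈ Hs i ∧ ∃ S' ∈ Q i, S' ⊂ S}, r S) :=
        Finset.sum_le_sum (fun i _ => hbound i)
      have h3 : ∑ i, ((∑ᶠ S ∈ Q i, c S)
          + (∑ᶠ S ∈ {S | S ∈ Q i ∧ Indivisible (Hs i) S}, p S)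
          + (∑ᶠ S ∈ {S | S ∈ Q i ∧ Divisible (Hs i) S}, q S)
          + ∑ᶠ S ∈ {S | S ∈ Hs i ∧ ∃ S' ∈ Q i, S' ⊂ S}, r S)
          = (∑ i, ∑ᶠ S ∈ Q i, c S)
          + (∑ i, ∑ᶠ S ∈ {S | S ∈ Q i ∧ Indivisible (Hs i) S}, p S)
          + (∑ i, ∑ᶠ S ∈ {S | S ∈ Q i ∧ Divisible (Hs i) S}, q S)
          + ∑ i, ∑ᶠ S ∈ {S | S ∈ Hs i ∧ ∃ S' ∈ Q i, S' ⊂ S}, r S := by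
        rw [Finset.sum_add_distrib, Finset.sum_add_distrib, Finset.sum_add_distrib]
      linarith

/-- HPF total loss bound: combining the per-segment competitor bounds at indivisible and
divisible segments of the partition `P` with the structural recursion bound yields the
total loss bound against the CPF. -/
theorem hpf_total_loss {α : Type*} (H : Set (Set α)) (X : Set α)
    (hH : IsHierarchicalPartition H X) (P : Set (Set α)) (hPH : P ⊆ H)
    (hpart : IsPartition P X)
    (L p q r : Set α → ℝ) (c : Set α → ℝ)
    (hindiv : ∀ S ∈ P, Indivisible H S → L S ≤ c S + p S)
    (hdiv : ∀ S ∈ P, Divisible H S → L S ≤ c S + q S)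
    (hrec : ∀ S ∈ H, Divisible H S →
      L S ≤ (∑ᶠ S' ∈ {S' | Divides H S' S}, L S') + r S) :
    L X ≤ (∑ᶠ S ∈ P, c S) + (∑ᶠ S ∈ {S | S ∈ P ∧ Indivisible H S}, p S)
      + (∑ᶠ S ∈ {S | S ∈ P ∧ Divisible H S}, q S)
      + ∑ᶠ S ∈ {S | S ∈ H ∧ ∃ S' ∈ P, S' ⊂ S}, r S := by
  exact hpf_aux L p q r c hH P hPH hpart hindiv hdiv hrec
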